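/- arXiv:1903.04100 — 2 statements merged into one kernel-verified Lean document; each statement's English description precedes it below -/
import Mathlib

section
/- Let f : ℝⁿ → ℝ be twice continuously differentiable, m > 0, γ ≥ 0, h > 0. Define the Nesterov step in phase space Ψ : ℝⁿ × ℝⁿ → ℝⁿ × ℝⁿ by Ψ(x, p) = (X, P) where x_{1/2} = x + (h/m) e^{−γh} p, P = e^{−γh} p − h ∇f(x_{1/2}), and X = x + (h/m) P. Then for every (x, p) and all tangent vectors ξ = (ξ_x, ξ_p), η = (η_x, η_p) ∈ ℝⁿ × ℝⁿ, the derivative of Ψ satisfies the exact identity ω(DΨ(x,p) ξ, DΨ(x,p) η) = e^{−γh} ω(ξ, η) − (h²/m) e^{−γh} ( ⟨ξ_x, ∇²f(x_{1/2}) η_p⟩ − ⟨η_x, ∇²f(x_{1/2}) ξ_p⟩ ). In particular, Ψ is not conformal symplectic in general: the symplectic form is contracted by the extra Hessian-dependent term. -/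
open scoped InnerProductSpace

/-- The standard symplectic form on `ℝⁿ × ℝⁿ`: `ω((a,b),(c,d)) = ⟨a,d⟩ − ⟨b,c⟩`. -/
noncomputable def sympForm {n : ℕ}
    (u v : EuclideanSpace ℝ (Fin n) × EuclideanSpace ℝ (Fin n)) : ℝ :=
  ⟪u.1, v.2⟫_ℝ - ⟪u.2, v.1⟫_ℝ

/-- Nesterov's accelerated gradient step in phase space:
`x_{1/2} = x + (h/m) e^{−γh} p`, `P = e^{−γh} p − h ∇f(x_{1/2})`,
`X = x + (h/m) P`. -/
noncomputable def nesterovStep {n : ℕ} (f : EuclideanSpace ℝ (Fin n) → ℝ) (m γ h : ℝ)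
    (z : EuclideanSpace ℝ (Fin n) × EuclideanSpace ℝ (Fin n)) :
    EuclideanSpace ℝ (Fin n) × EuclideanSpace ℝ (Fin n) :=
  let P := Real.exp (-γ * h) • z.2 - h • gradient f (z.1 + (h / m) • (Real.exp (-γ * h) • z.2))
  (z.1 + (h / m) • P, P)

/-!
Ψ is the damped kick `(x, p) ↦ (x, P)` followed by the shear `(x, P) ↦ (x + (h/m) P, P)`, so `DΨ`
is the same composition with `∇f` replaced by the Hessian `H` at `x_{1/2}`. The shear is
symplectic. The linearised kick scales `ω` by `e^{−γh}`, and since `H` is symmetric its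
`−h H ξ_x` part drops out of `ω`; what survives is the cross term from `H` acting on the
momentum through `x_{1/2} = x + (h/m) e^{−γh} p`.
-/

theorem ContDiffAt.differentiableAt_fderiv {𝕜 E F : Type*} [NontriviallyNormedField 𝕜]
    [NormedAddCommGroup E] [NormedSpace 𝕜 E] [NormedAddCommGroup F] [NormedSpace 𝕜 F]
    {f : E → F} {x : E} (hf : ContDiffAt 𝕜 2 f x) : DifferentiableAt 𝕜 (fderiv 𝕜 f) x :=
  (hf.fderiv_right (m := 1) le_rfl).differentiableAt one_ne_zero

section Hessian

open InnerProductSpace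

variable {E : Type*} [NormedAddCommGroup E] [InnerProductSpace ℝ E] [CompleteSpace E]
  {f : E → ℝ} {y : E}

theorem hasFDerivAt_gradient (hf : DifferentiableAt ℝ (fderiv ℝ f) y) :
    HasFDerivAt (gradient f)
      ((toDual ℝ E).symm.toLinearIsometry.toContinuousLinearMap ∘L fderiv ℝ (fderiv ℝ f) y) y :=
  (toDual ℝ E).symm.toLinearIsometry.toContinuousLinearMap.hasFDerivAt.comp y hf.hasFDerivAt

theorem inner_fderiv_gradient_apply (hf : DifferentiableAt ℝ (fderiv ℝ f) y) (u v : E) :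
    ⟪fderiv ℝ (gradient f) y u, v⟫_ℝ = fderiv ℝ (fderiv ℝ f) y u v := by
  rw [(hasFDerivAt_gradient hf).fderiv]
  exact toDual_symm_apply

theorem ContDiffAt.differentiableAt_gradient (hf : ContDiffAt ℝ 2 f y) :
    DifferentiableAt ℝ (gradient f) y :=
  (hasFDerivAt_gradient hf.differentiableAt_fderiv).differentiableAt

theorem ContDiffAt.isSymmetric_fderiv_gradient (hf : ContDiffAt ℝ 2 f y) :
    (fderiv ℝ (gradient f) y : E →ₗ[ℝ] E).IsSymmetric := by
  have hf' := hf.differentiableAt_fderiv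
  intro u v
  change ⟪fderiv ℝ (gradient f) y u, v⟫_ℝ = ⟪u, fderiv ℝ (gradient f) y v⟫_ℝ
  rw [← real_inner_comm u,
    inner_fderiv_gradient_apply hf', inner_fderiv_gradient_apply hf',
    (hf.isSymmSndFDerivAt (by simp [minSmoothness_of_isRCLikeNormedField])).eq]

end Hessian

section Phase

variable {n : ℕ}

local notation "E" => EuclideanSpace ℝ (Fin n)

theorem sympForm_add_smul_snd (a b P Q : E) (k : ℝ) :
    sympForm (a + k • P, P) (b + k • Q, Q) = sympForm (a, P) (b, Q) := by
  simp only [sympForm, inner_add_left, inner_add_right, real_inner_smul_left,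
    real_inner_smul_right]
  ring

theorem sympForm_kick {H : E →L[ℝ] E} (hH : (H : E →ₗ[ℝ] E).IsSymmetric) (c h s : ℝ) (ξ η : E × E) :
    sympForm (ξ.1, c • ξ.2 - h • H (ξ.1 + s • ξ.2)) (η.1, c • η.2 - h • H (η.1 + s • η.2))
      = c * sympForm ξ η - h * s * (⟪ξ.1, H η.2⟫_ℝ - ⟪η.1, H ξ.2⟫_ℝ) := by
  have h₁ : ⟪H ξ.1, η.1⟫_ℝ = ⟪ξ.1, H η.1⟫_ℝ := hH ξ.1 η.1
  have h₂ : ⟪H ξ.2, η.1⟫_ℝ = ⟪η.1, H ξ.2⟫_ℝ := real_inner_comm _ _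
  simp only [sympForm, map_add, map_smul, inner_add_left, inner_add_right, inner_sub_left,
    inner_sub_right, real_inner_smul_left, real_inner_smul_right]
  rw [h₁, h₂]
  ring

theorem fderiv_nesterovStep_apply {f : E → ℝ} {m γ h : ℝ} {x p : E}
    (hf : DifferentiableAt ℝ (gradient f) (x + (h / m) • (Real.exp (-γ * h) • p))) (ξ : E × E) :
    fderiv ℝ (nesterovStep f m γ h) (x, p) ξ =
      let P := Real.exp (-γ * h) • ξ.2 - h • fderiv ℝ (gradient f)
        (x + (h / m) • (Real.exp (-γ * h) • p)) (ξ.1 + (h / m * Real.exp (-γ * h)) • ξ.2)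
      (ξ.1 + (h / m) • P, P) := by
  set c := Real.exp (-γ * h)
  have hmid : HasFDerivAt (fun z : E × E => z.1 + (h / m) • (c • z.2))
      (ContinuousLinearMap.fst ℝ E E + (h / m) • c • ContinuousLinearMap.snd ℝ E E) (x, p) :=
    hasFDerivAt_fst.add ((hasFDerivAt_snd.const_smul c).const_smul (h / m))
  have hP := (hasFDerivAt_snd.const_smul c).sub ((hf.hasFDerivAt.comp (x, p) hmid).const_smul h)
  have hΨ : HasFDerivAt (nesterovStep f m γ h) _ (x, p) :=
    (hasFDerivAt_fst.add (hP.const_smul (h / m))).prodMk hP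
  rw [hΨ.fderiv]
  simp [c, smul_smul]

end Phase

theorem nesterov_symplectic_form_identity_general
    {n : ℕ} (f : EuclideanSpace ℝ (Fin n) → ℝ) (hf : ContDiff ℝ 2 f)
    (m γ h : ℝ) :
    ∀ (x p : EuclideanSpace ℝ (Fin n))
      (ξ η : EuclideanSpace ℝ (Fin n) × EuclideanSpace ℝ (Fin n)),
      sympForm (fderiv ℝ (nesterovStep f m γ h) (x, p) ξ)
          (fderiv ℝ (nesterovStep f m γ h) (x, p) η)
        = Real.exp (-γ * h) * sympForm ξ η
          - (h ^ 2 / m) * Real.exp (-γ * h) *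
            (⟪ξ.1, fderiv ℝ (gradient f) (x + (h / m) • (Real.exp (-γ * h) • p)) η.2⟫_ℝ
              - ⟪η.1, fderiv ℝ (gradient f) (x + (h / m) • (Real.exp (-γ * h) • p)) ξ.2⟫_ℝ) := by
  intro x p ξ η
  have hf₂ := hf.contDiffAt (x := x + (h / m) • (Real.exp (-γ * h) • p))
  rw [fderiv_nesterovStep_apply hf₂.differentiableAt_gradient,
    fderiv_nesterovStep_apply hf₂.differentiableAt_gradient, sympForm_add_smul_snd, sympForm_kick hf₂.isSymmetric_fderiv_gradient]
  ring

/-- Nesterov's step contracts the symplectic form with an extra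
Hessian-dependent term; the exact identity is
`ω(DΨ ξ, DΨ η) = e^{−γh} ω(ξ,η) − (h²/m) e^{−γh} (⟨ξ_x, ∇²f(x_{1/2}) η_p⟩ − ⟨η_x, ∇²f(x_{1/2}) ξ_p⟩)`.
In particular Nesterov's method is not conformal symplectic in general. -/
theorem nesterov_symplectic_form_identity
    {n : ℕ} (f : EuclideanSpace ℝ (Fin n) → ℝ) (hf : ContDiff ℝ 2 f)
    (m γ h : ℝ) (hm : 0 < m) (hγ : 0 ≤ γ) (hh : 0 < h) :
    ∀ (x p : EuclideanSpace ℝ (Fin n))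
      (ξ η : EuclideanSpace ℝ (Fin n) × EuclideanSpace ℝ (Fin n)),
      sympForm (fderiv ℝ (nesterovStep f m γ h) (x, p) ξ)
          (fderiv ℝ (nesterovStep f m γ h) (x, p) η)
        = Real.exp (-γ * h) * sympForm ξ η
          - (h ^ 2 / m) * Real.exp (-γ * h) *
            (⟪ξ.1, fderiv ℝ (gradient f) (x + (h / m) • (Real.exp (-γ * h) • p)) η.2⟫_ℝ
              - ⟪η.1, fderiv ℝ (gradient f) (x + (h / m) • (Real.exp (-γ * h) • p)) ξ.2⟫_ℝ) :=
  nesterov_symplectic_form_identity_general f hf m γ h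
end

section
/- Let f : ℝⁿ → ℝ be three times continuously differentiable, m > 0, γ ≥ 0, T > 0, and let (x, p) : [0, T] → ℝⁿ × ℝⁿ be a solution of ẋ = p/m, ṗ = −∇f(x) − γ p. For h > 0 define one dissipative leapfrog step from the initial condition: x̃_h = x(0) + (h/(2m)) e^{−γh/2} p(0), p̃_h = e^{−γh/2} p(0) − h ∇f(x̃_h), X_h = x̃_h + (h/(2m)) p̃_h, P_h = e^{−γh/2} p̃_h. Then the dissipative leapfrog method has local error of order h³ (i.e., it is an integrator of order 2): there exist constants C > 0 and ε ∈ (0, T] such that for all h ∈ (0, ε], ‖X_h − x(h)‖ + ‖P_h − p(h)‖ ≤ C h³. -/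
/-!
Everything is expanded in powers of `h`. The solution is `C³` on `[0, T]` because `∇f` is `C²`, so
Taylor's theorem gives `x(h)` and `p(h)` up to `O(h³)`, with second derivatives read off from the
equations of motion. In the leapfrog step, `e^{-γh/2}` and the force `∇f(x̃_h)` at the midpoint are
expanded only as far as the power of `h` in front of them requires. The step error then splits
into terms, each a product of such remainders whose orders add up to `3`; that no lower-order
term survives is a polynomial identity in `h` and `e^{-γh/2}`.
-/

open Set Filter Topology Asymptotics

theorem exists_pos_bound_of_isBigO_nhdsGT {u : ℝ → ℝ} {T : ℝ} {k : ℕ} (hT : 0 < T)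
    (hu : u =O[𝓝[>] 0] (· ^ k)) :
    ∃ C > 0, ∃ ε ∈ Ioc (0 : ℝ) T, ∀ h ∈ Ioc (0 : ℝ) ε, u h ≤ C * h ^ k := by
  obtain ⟨C, hC, hbound⟩ := hu.exists_pos
  obtain ⟨δ, hδ, hδu⟩ := mem_nhdsGT_iff_exists_Ioc_subset.mp hbound.bound
  refine ⟨C, hC, min δ T, ⟨lt_min hδ hT, min_le_right _ _⟩, fun h hh => ?_⟩
  calc u h ≤ ‖u h‖ := Real.le_norm_self _
    _ ≤ C * ‖h ^ k‖ := hδu ⟨hh.1, hh.2.trans (min_le_left _ _)⟩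
    _ = C * h ^ k := by rw [Real.norm_of_nonneg (pow_nonneg hh.1.le _)]

theorem isBigO_const_pow_zero {F : Type*} [NormedAddCommGroup F] (v : F) (l : Filter ℝ) :
    (fun _ => v) =O[l] (· ^ 0 : ℝ → ℝ) :=
  (isBigO_const_one ℝ v l).congr_right fun h => (pow_zero h).symm

variable {E : Type*} [NormedAddCommGroup E] [NormedSpace ℝ E]

theorem Asymptotics.IsBigO.smul_pow {l : Filter ℝ} {c : ℝ → ℝ} {u : ℝ → E} {i j : ℕ}
    (hc : c =O[l] (· ^ i)) (hu : u =O[l] (· ^ j)) :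
    (fun h => c h • u h) =O[l] (· ^ (i + j)) :=
  (hc.smul hu).congr_right fun h => by rw [smul_eq_mul, pow_add]

theorem Real.exp_const_mul_sub_sum_range_isBigO_pow (c : ℝ) (n : ℕ) :
    (fun h => Real.exp (c * h) - ∑ i ∈ Finset.range n, (c * h) ^ i / i.factorial)
      =O[𝓝 0] (· ^ n) := by
  have hlin : Tendsto (fun h : ℝ => c * h) (𝓝 0) (𝓝 0) := by
    simpa using (continuous_const_mul c).tendsto 0
  refine ((Real.exp_sub_sum_range_isBigO_pow n).comp_tendsto hlin).trans ?_
  exact ((isBigO_refl (· ^ n) (𝓝 (0 : ℝ))).const_mul_left (c ^ n)).congr_left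
    fun h => by simp [mul_pow]

theorem Real.exp_const_mul_taylor_isBigO (c : ℝ) :
    (fun h => Real.exp (c * h) - 1) =O[𝓝[>] 0] (· ^ 1) ∧
    (fun h => Real.exp (c * h) - 1 - c * h) =O[𝓝[>] 0] (· ^ 2) ∧
    (fun h => Real.exp (c * h) - 1 - c * h - (c * h) ^ 2 / 2) =O[𝓝[>] 0] (· ^ 3) := by
  refine ⟨?_, ?_, ?_⟩ <;>
  · refine ((Real.exp_const_mul_sub_sum_range_isBigO_pow c _).mono nhdsWithin_le_nhds).congr_left
      fun h => ?_
    simp [Finset.sum_range_succ, sub_sub]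

theorem taylor_isBigO_nhdsGT {f : ℝ → E} {a b : ℝ} {n : ℕ} (hab : a < b)
    (hf : ContDiffOn ℝ (n + 1) f (Icc a b)) :
    (fun x => f x - taylorWithinEval f n (Icc a b) a x) =O[𝓝[>] a] fun x => (x - a) ^ (n + 1) := by
  obtain ⟨C, hC⟩ := exists_taylor_mean_remainder_bound hab.le hf
  refine IsBigO.of_bound C ?_
  filter_upwards [Icc_mem_nhdsGT hab] with x hx
  rw [Real.norm_of_nonneg (pow_nonneg (sub_nonneg.mpr hx.1) _)]
  exact hC x hx

theorem taylorWithinEval_one_of_hasDerivWithinAt {f : ℝ → E} {f' : E} {s : Set ℝ} {x₀ : ℝ}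
    (hs : UniqueDiffOn ℝ s) (hx₀ : x₀ ∈ s) (hf : HasDerivWithinAt f f' s x₀) (x : ℝ) :
    taylorWithinEval f 1 s x₀ x = f x₀ + (x - x₀) • f' := by
  simp [taylor_within_apply, hf.derivWithin (hs x₀ hx₀)]

theorem taylorWithinEval_two_of_hasDerivWithinAt {f f' : ℝ → E} {f'' : E} {s : Set ℝ} {x₀ : ℝ}
    (hs : UniqueDiffOn ℝ s) (hx₀ : x₀ ∈ s) (hf : ∀ t ∈ s, HasDerivWithinAt f (f' t) s t)
    (hf' : HasDerivWithinAt f' f'' s x₀) (x : ℝ) :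
    taylorWithinEval f 2 s x₀ x = f x₀ + (x - x₀) • f' x₀ + ((x - x₀) ^ 2 / 2) • f'' := by
  have hderiv : EqOn (iteratedDerivWithin 1 f s) f' s := fun t ht => by
    rw [iteratedDerivWithin_one]; exact (hf t ht).derivWithin (hs t ht)
  have hderiv₂ : iteratedDerivWithin 2 f s x₀ = f'' := by
    rw [iteratedDerivWithin_succ, derivWithin_congr hderiv (hderiv hx₀)]
    exact hf'.derivWithin (hs x₀ hx₀)
  simp [taylor_within_apply, hderiv hx₀, hderiv₂, div_eq_inv_mul, one_add_one_eq_two]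

theorem taylor_isBigO_one {f : ℝ → E} {f' : E} {a b : ℝ} (hab : a < b)
    (hf : ContDiffOn ℝ 2 f (Icc a b)) (hfa : HasDerivWithinAt f f' (Icc a b) a) :
    (fun x => f x - f a - (x - a) • f') =O[𝓝[>] a] fun x => (x - a) ^ 2 :=
  (taylor_isBigO_nhdsGT (n := 1) hab hf).congr_left fun x => by
    rw [taylorWithinEval_one_of_hasDerivWithinAt (uniqueDiffOn_Icc hab) (left_mem_Icc.mpr hab.le)
      hfa, sub_add_eq_sub_sub]

theorem taylor_isBigO_two {f f' : ℝ → E} {f'' : E} {a b : ℝ} (hab : a < b)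
    (hf : ContDiffOn ℝ 3 f (Icc a b)) (hf' : ∀ t ∈ Icc a b, HasDerivWithinAt f (f' t) (Icc a b) t)
    (hf'a : HasDerivWithinAt f' f'' (Icc a b) a) :
    (fun x => f x - f a - (x - a) • f' a - ((x - a) ^ 2 / 2) • f'') =O[𝓝[>] a]
      fun x => (x - a) ^ 3 :=
  (taylor_isBigO_nhdsGT (n := 2) hab hf).congr_left fun x => by
    rw [taylorWithinEval_two_of_hasDerivWithinAt (uniqueDiffOn_Icc hab) (left_mem_Icc.mpr hab.le)
      hf' hf'a]
    abel

theorem contDiffOn_succ_of_hasDerivWithinAt {u u' : ℝ → E} {s : Set ℝ} {k : ℕ}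
    (hs : UniqueDiffOn ℝ s) (hu : ∀ t ∈ s, HasDerivWithinAt u (u' t) s t)
    (hu' : ContDiffOn ℝ k u' s) : ContDiffOn ℝ (k + 1) u s :=
  (contDiffOn_succ_iff_derivWithin hs).mpr ⟨fun t ht => (hu t ht).differentiableWithinAt,
    by simp, hu'.congr fun t ht => (hu t ht).derivWithin (hs t ht)⟩

theorem ContDiff.gradient {F : Type*} [NormedAddCommGroup F] [InnerProductSpace ℝ F]
    [CompleteSpace F] {f : F → ℝ} {k n : WithTop ℕ∞} (hf : ContDiff ℝ k f) (hn : n + 1 ≤ k) :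
    ContDiff ℝ n (gradient f) :=
  (InnerProductSpace.toDual ℝ F).symm.contDiff.comp (hf.fderiv_right hn)

def IsConformalHamiltonianSolution (g : E → E) (m γ : ℝ) (s : Set ℝ) (x p : ℝ → E) : Prop :=
  (∀ t ∈ s, HasDerivWithinAt x ((1 / m) • p t) s t) ∧
    ∀ t ∈ s, HasDerivWithinAt p (-(g (x t)) - γ • p t) s t

noncomputable def leapfrogMidpoint (m γ h : ℝ) (y v : E) : E :=
  y + (h / (2 * m)) • (Real.exp (-γ * h / 2) • v)

noncomputable def leapfrogStep (g : E → E) (m γ h : ℝ) (z : E × E) : E × E :=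
  let y := leapfrogMidpoint m γ h z.1 z.2
  let w := Real.exp (-γ * h / 2) • z.2 - h • g y
  (y + (h / (2 * m)) • w, Real.exp (-γ * h / 2) • w)

@[simp]
theorem leapfrogMidpoint_zero (m γ : ℝ) (y v : E) : leapfrogMidpoint m γ 0 y v = y := by
  simp [leapfrogMidpoint]

theorem hasDerivAt_leapfrogMidpoint (m γ : ℝ) (y v : E) :
    HasDerivAt (fun h => leapfrogMidpoint m γ h y v) ((1 / (2 * m)) • v) 0 := by
  have hc : HasDerivAt (fun h : ℝ => h / (2 * m) * Real.exp (-γ * h / 2)) (1 / (2 * m)) 0 := by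
    simpa using ((hasDerivAt_id (0 : ℝ)).div_const (2 * m)).fun_mul
      (((hasDerivAt_id (0 : ℝ)).const_mul (-γ)).div_const 2).exp
  simpa [leapfrogMidpoint, smul_smul] using (hc.smul_const v).const_add y

theorem contDiff_leapfrogMidpoint (m γ : ℝ) (y v : E) :
    ContDiff ℝ 2 (fun h => leapfrogMidpoint m γ h y v) := by
  unfold leapfrogMidpoint; fun_prop

variable {g : E → E}

theorem hasDerivAt_comp_leapfrogMidpoint (hg : ContDiff ℝ 2 g) (m γ : ℝ) (y v : E) :
    HasDerivAt (fun h => g (leapfrogMidpoint m γ h y v)) (fderiv ℝ g y ((1 / (2 * m)) • v)) 0 := by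
  have := (hg.differentiable two_ne_zero (leapfrogMidpoint m γ 0 y v)).hasFDerivAt.comp_hasDerivAt
    0 (hasDerivAt_leapfrogMidpoint m γ y v)
  rwa [leapfrogMidpoint_zero] at this

theorem comp_leapfrogMidpoint_taylor_isBigO (hg : ContDiff ℝ 2 g) (m γ : ℝ) (y v : E) :
    (fun h => g (leapfrogMidpoint m γ h y v) - g y - h • fderiv ℝ g y ((1 / (2 * m)) • v))
      =O[𝓝[>] 0] (· ^ 2) := by
  simpa using taylor_isBigO_one zero_lt_one
    (hg.comp (contDiff_leapfrogMidpoint m γ y v)).contDiffOn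
    (hasDerivAt_comp_leapfrogMidpoint hg m γ y v).hasDerivWithinAt

namespace IsConformalHamiltonianSolution

variable {m γ T : ℝ} {x p : ℝ → E}

theorem contDiffOn {s : Set ℝ} {k : ℕ} (hsol : IsConformalHamiltonianSolution g m γ s x p)
    (hs : UniqueDiffOn ℝ s) (hg : ContDiff ℝ k g) :
    ContDiffOn ℝ (k + 1) x s ∧ ContDiffOn ℝ (k + 1) p s := by
  induction k with
  | zero =>
    have hxc : ContinuousOn x s := fun t ht => (hsol.1 t ht).continuousWithinAt
    have hpc : ContinuousOn p s := fun t ht => (hsol.2 t ht).continuousWithinAt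
    exact ⟨contDiffOn_succ_of_hasDerivWithinAt hs hsol.1 (contDiffOn_zero.mpr (hpc.const_smul _)),
      contDiffOn_succ_of_hasDerivWithinAt hs hsol.2 (contDiffOn_zero.mpr
        ((hg.continuous.comp_continuousOn hxc).neg.sub (hpc.const_smul γ)))⟩
  | succ k ih =>
    obtain ⟨hxk, hpk⟩ := ih (hg.of_le (by norm_cast; omega))
    push_cast at hxk hpk ⊢
    exact ⟨contDiffOn_succ_of_hasDerivWithinAt hs hsol.1 (hpk.const_smul _),
      contDiffOn_succ_of_hasDerivWithinAt hs hsol.2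
        ((hg.comp_contDiffOn hxk).neg.sub (hpk.const_smul γ))⟩

theorem position_taylor_isBigO (hsol : IsConformalHamiltonianSolution g m γ (Icc 0 T) x p)
    (hg : ContDiff ℝ 2 g) (hT : 0 < T) :
    (fun h => x h - x 0 - h • ((1 / m) • p 0) - (h ^ 2 / 2) • ((1 / m) • (-(g (x 0)) - γ • p 0)))
      =O[𝓝[>] 0] (· ^ 3) := by
  have hx₃ := (hsol.contDiffOn (k := 2) (uniqueDiffOn_Icc hT) hg).1
  simpa using taylor_isBigO_two hT hx₃ hsol.1
    ((hsol.2 0 (left_mem_Icc.mpr hT.le)).const_smul (1 / m))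

theorem momentum_taylor_isBigO (hsol : IsConformalHamiltonianSolution g m γ (Icc 0 T) x p)
    (hg : ContDiff ℝ 2 g) (hT : 0 < T) :
    (fun h => p h - p 0 - h • (-(g (x 0)) - γ • p 0)
        - (h ^ 2 / 2) • (-(fderiv ℝ g (x 0) ((1 / m) • p 0)) - γ • (-(g (x 0)) - γ • p 0)))
      =O[𝓝[>] 0] (· ^ 3) := by
  have h₀ : (0 : ℝ) ∈ Icc 0 T := left_mem_Icc.mpr hT.le
  have hp₃ := (hsol.contDiffOn (k := 2) (uniqueDiffOn_Icc hT) hg).2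
  have hforce : HasDerivWithinAt (fun t => g (x t)) (fderiv ℝ g (x 0) ((1 / m) • p 0))
      (Icc 0 T) 0 :=
    (hg.differentiable two_ne_zero (x 0)).hasFDerivAt.comp_hasDerivWithinAt 0 (hsol.1 0 h₀)
  simpa using taylor_isBigO_two hT hp₃ hsol.2 (hforce.neg.sub ((hsol.2 0 h₀).const_smul γ))

theorem leapfrog_position_error_isBigO
    (hsol : IsConformalHamiltonianSolution g m γ (Icc 0 T) x p) (hg : ContDiff ℝ 2 g)
    (hT : 0 < T) :
    (fun h => (leapfrogStep g m γ h (x 0, p 0)).1 - x h) =O[𝓝[>] 0] (· ^ 3) := by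
  set ψ := fun h => g (leapfrogMidpoint m γ h (x 0) (p 0))
  have hψ : (fun h => ψ h - ψ 0) =O[𝓝[>] 0] (· ^ 1) :=
    ((hasDerivAt_comp_leapfrogMidpoint hg m γ (x 0) (p 0)).isBigO_sub.mono
      nhdsWithin_le_nhds).congr_right fun h => by simp
  have hexp := (Real.exp_const_mul_taylor_isBigO (-γ / 2)).2.1
  have key := ((((isBigO_refl (· ^ 1) _).const_mul_left (1 / m)).smul_pow
      (hexp.smul_pow (isBigO_const_pow_zero (p 0) _))).sub
      (((isBigO_refl (· ^ 2) _).const_mul_left (1 / (2 * m))).smul_pow hψ)).sub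
      (hsol.position_taylor_isBigO hg hT)
  refine key.congr_left fun h => ?_
  simp only [leapfrogStep, ψ, leapfrogMidpoint_zero]
  simp only [leapfrogMidpoint, show -γ * h / 2 = -γ / 2 * h by ring]
  module

theorem leapfrog_momentum_error_isBigO
    (hsol : IsConformalHamiltonianSolution g m γ (Icc 0 T) x p) (hg : ContDiff ℝ 2 g)
    (hT : 0 < T) :
    (fun h => (leapfrogStep g m γ h (x 0, p 0)).2 - p h) =O[𝓝[>] 0] (· ^ 3) := by
  set d := fderiv ℝ g (x 0) ((1 / (2 * m)) • p 0)
  obtain ⟨hexp₁, hexp₂, -⟩ := Real.exp_const_mul_taylor_isBigO (-γ / 2)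
  have hexp₃ := (Real.exp_const_mul_taylor_isBigO (-γ)).2.2
  have hexp₀ : (fun h => Real.exp (-γ / 2 * h)) =O[𝓝[>] 0] (· ^ 0) := by
    have : Tendsto (fun h => Real.exp (-γ / 2 * h)) (𝓝[>] 0) (𝓝 1) :=
      ((by fun_prop : Continuous fun h => Real.exp (-γ / 2 * h)).tendsto' 0 1 (by simp)).mono_left
        nhdsWithin_le_nhds
    exact (this.isBigO_one ℝ).congr_right fun h => (pow_zero h).symm
  have hd : fderiv ℝ g (x 0) ((1 / m) • p 0) = (2 : ℝ) • d := by
    rw [← map_smul, smul_smul]; congr 2; ring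
  have key := ((((hexp₃.smul_pow (isBigO_const_pow_zero (p 0) _)).sub
      ((isBigO_refl (· ^ 1) _).smul_pow
        (hexp₀.smul_pow (comp_leapfrogMidpoint_taylor_isBigO hg m γ (x 0) (p 0))))).sub
      ((isBigO_refl (· ^ 1) _).smul_pow (hexp₂.smul_pow (isBigO_const_pow_zero (g (x 0)) _)))).sub
      ((isBigO_refl (· ^ 2) _).smul_pow (hexp₁.smul_pow (isBigO_const_pow_zero d _)))).sub
      (hsol.momentum_taylor_isBigO hg hT)
  refine key.congr_left fun h => ?_
  simp only [leapfrogStep, leapfrogMidpoint, hd, show -γ * h / 2 = -γ / 2 * h by ring]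
  rw [show -γ * h = -γ / 2 * h + -γ / 2 * h by ring, Real.exp_add]
  module

end IsConformalHamiltonianSolution

theorem leapfrog_local_error_order_two_general
    {n : ℕ} (f : EuclideanSpace ℝ (Fin n) → ℝ) (hf : ContDiff ℝ 3 f)
    (m γ T : ℝ) (hT : 0 < T)
    (x p : ℝ → EuclideanSpace ℝ (Fin n))
    (hx : ∀ t ∈ Set.Icc (0 : ℝ) T,
      HasDerivWithinAt x ((1 / m) • p t) (Set.Icc 0 T) t)
    (hp : ∀ t ∈ Set.Icc (0 : ℝ) T,
      HasDerivWithinAt p (-(gradient f (x t)) - γ • p t) (Set.Icc 0 T) t) :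
    ∃ C > 0, ∃ ε ∈ Set.Ioc (0 : ℝ) T, ∀ h ∈ Set.Ioc (0 : ℝ) ε,
      ‖((x 0 + (h / (2 * m)) • (Real.exp (-γ * h / 2) • p 0))
          + (h / (2 * m)) • (Real.exp (-γ * h / 2) • p 0
              - h • gradient f (x 0 + (h / (2 * m)) • (Real.exp (-γ * h / 2) • p 0)))) - x h‖
        + ‖Real.exp (-γ * h / 2) • (Real.exp (-γ * h / 2) • p 0
              - h • gradient f (x 0 + (h / (2 * m)) • (Real.exp (-γ * h / 2) • p 0))) - p h‖
        ≤ C * h ^ 3 := by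
  have hg : ContDiff ℝ 2 (gradient f) := hf.gradient (by norm_num)
  have hsol : IsConformalHamiltonianSolution (gradient f) m γ (Icc 0 T) x p := ⟨hx, hp⟩
  exact exists_pos_bound_of_isBigO_nhdsGT hT
    ((hsol.leapfrog_position_error_isBigO hg hT).norm_left.add
      (hsol.leapfrog_momentum_error_isBigO hg hT).norm_left)

/-- the dissipative leapfrog method has local error of order `h³`
(it is an integrator of order 2) for the conformal Hamiltonian system
`ẋ = p/m`, `ṗ = −∇f(x) − γp`.  The step from the initial condition is
`x̃ = x(0) + (h/(2m)) e^{−γh/2} p(0)`, `p̃ = e^{−γh/2} p(0) − h ∇f(x̃)`,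
`X = x̃ + (h/(2m)) p̃`, `P = e^{−γh/2} p̃`. -/
theorem leapfrog_local_error_order_two
    {n : ℕ} (f : EuclideanSpace ℝ (Fin n) → ℝ) (hf : ContDiff ℝ 3 f)
    (m γ T : ℝ) (hm : 0 < m) (hγ : 0 ≤ γ) (hT : 0 < T)
    (x p : ℝ → EuclideanSpace ℝ (Fin n))
    (hx : ∀ t ∈ Set.Icc (0 : ℝ) T,
      HasDerivWithinAt x ((1 / m) • p t) (Set.Icc 0 T) t)
    (hp : ∀ t ∈ Set.Icc (0 : ℝ) T,
      HasDerivWithinAt p (-(gradient f (x t)) - γ • p t) (Set.Icc 0 T) t) :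
    ∃ C > 0, ∃ ε ∈ Set.Ioc (0 : ℝ) T, ∀ h ∈ Set.Ioc (0 : ℝ) ε,
      ‖((x 0 + (h / (2 * m)) • (Real.exp (-γ * h / 2) • p 0))
          + (h / (2 * m)) • (Real.exp (-γ * h / 2) • p 0
              - h • gradient f (x 0 + (h / (2 * m)) • (Real.exp (-γ * h / 2) • p 0)))) - x h‖
        + ‖Real.exp (-γ * h / 2) • (Real.exp (-γ * h / 2) • p 0
              - h • gradient f (x 0 + (h / (2 * m)) • (Real.exp (-γ * h / 2) • p 0))) - p h‖
        ≤ C * h ^ 3 :=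
  leapfrog_local_error_order_two_general f hf m γ T hT x p hx hp
end
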